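/- Suppose the graph Δ_t(n,k−1) is connected with diameter d. Then any two codes in C_t(n,k) \ I_t(n,k) are at distance at most d + 1 in the graph Λ_t(n,k). -/

import Mathlib

open Finset

variable (F : Type) [Field F] [Fintype F] [DecidableEq F]

/-- The dual code of a linear code `C ⊆ F^n`, with respect to the standard bilinear form. -/
def dualCode (n : ℕ) (C : Submodule F (Fin n → F)) : Submodule F (Fin n → F) where
  carrier := {v | ∀ c ∈ C, ∑ i, v i * c i = 0}
  zero_mem' := by intro c _; simp
  add_mem' := by
    intro a b ha hb c hc
    simp only [Set.mem_setOf_eq] at *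
    simp [add_mul, Finset.sum_add_distrib, ha c hc, hb c hc]
  smul_mem' := by
    intro r a ha c hc
    simp only [Set.mem_setOf_eq] at *
    simp [smul_eq_mul, mul_assoc, ← Finset.mul_sum, ha c hc]

/-- `goodCode F n t k C` says that `C` is an `[n,k]`-linear code over `F` whose dual minimum
distance is at least `t+1`, i.e. `C ∈ C_t(n,k)`. -/
def goodCode (n t k : ℕ) (C : Submodule F (Fin n → F)) : Prop :=
  Module.finrank F C = k ∧ ∀ v ∈ dualCode F n C, v ≠ 0 → t + 1 ≤ hammingNorm v

/-- The Grassmann graph `Δ_t(n,k)` of codes in `C_t(n,k)`: two codes are adjacent iff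
their intersection has dimension `k-1`. -/
def deltaGraph (n t k : ℕ) : SimpleGraph {C : Submodule F (Fin n → F) // goodCode F n t k C} where
  Adj X Y := X ≠ Y ∧ Module.finrank F ↥(X.1 ⊓ Y.1) = k - 1
  symm := ⟨by
    rintro X Y ⟨h1, h2⟩
    exact ⟨h1.symm, by rwa [inf_comm]⟩⟩
  loopless := ⟨by rintro X ⟨h1, _⟩; exact h1 rfl⟩

/-- The graph `Λ_t(n,k)` of codes in `C_t(n,k)`: two codes are adjacent iff
their intersection belongs to `C_t(n,k-1)`. -/
def lambdaGraph (n t k : ℕ) : SimpleGraph {C : Submodule F (Fin n → F) // goodCode F n t k C} where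
  Adj X Y := X ≠ Y ∧ goodCode F n t (k-1) (X.1 ⊓ Y.1)
  symm := ⟨by
    rintro X Y ⟨h1, h2⟩
    exact ⟨h1.symm, by rwa [inf_comm]⟩⟩
  loopless := ⟨by rintro X ⟨h1, _⟩; exact h1 rfl⟩

/-- A code `C ∈ C_t(n,k)` is isolated if no `(k-1)`-dimensional subspace of `C`
belongs to `C_t(n,k-1)`. -/
def IsIsolated (n t k : ℕ) (C : Submodule F (Fin n → F)) : Prop :=
  ∀ D : Submodule F (Fin n → F), D ≤ C → ¬ goodCode F n t (k-1) D

/-- A monomial transformation of `F^n`: a permutation of the coordinates composed with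
multiplication of each coordinate by a nonzero scalar. -/
def IsMonomial (n : ℕ) (ρ : (Fin n → F) ≃ₗ[F] (Fin n → F)) : Prop :=
  ∃ (σ : Equiv.Perm (Fin n)) (d : Fin n → F),
    (∀ i, d i ≠ 0) ∧ ∀ (v : Fin n → F) (i : Fin n), ρ v i = d i * v (σ i)

/-- `S_s(Ω)`: the set of points (`1`-dimensional subspaces) of `PG(k-1,q)` lying on a subspace
spanned by `s+1` points of `Ω`. (We represent any subspace by the corresponding submodule of
`F^k`, and points of `PG(k-1,q)` by `1`-dimensional submodules.) -/
def satPoints (k s : ℕ) (Ω : Set (Submodule F (Fin k → F))) : Set (Submodule F (Fin k → F)) :=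
  {P | ∃ T : Finset (Submodule F (Fin k → F)), ↑T ⊆ Ω ∧ T.card = s + 1 ∧ P ≤ T.sup id}

/-- A set `Ω` of points of `PG(k-1,q)` is `s`-saturating if `S_s(Ω)` is the whole point set of
`PG(k-1,q)` while (for `s ≥ 1`) `S_{s-1}(Ω)` is not. -/
def IsSaturating (k s : ℕ) (Ω : Set (Submodule F (Fin k → F))) : Prop :=
  (∀ P : Submodule F (Fin k → F), Module.finrank F P = 1 → P ∈ satPoints F k s Ω) ∧
  (1 ≤ s → ¬ ∀ P : Submodule F (Fin k → F), Module.finrank F P = 1 → P ∈ satPoints F k (s-1) Ω)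

/-!
Choose subcodes `A ≤ X` and `B ≤ Y` in `C_t(n,k-1)` and a shortest path
`A = Z₀, Z₁, …, Z_m = B` in `Δ_t(n,k-1)`, so `m ≤ d`. Consecutive codes span the `k`-dimensional
code `Z_i ⊔ Z_{i+1}`, which lies in `C_t(n,k)` since enlarging a code shrinks its dual. Two codes of
`C_t(n,k)` sharing a subcode in `C_t(n,k-1)` are equal or adjacent in `Λ_t(n,k)`, that subcode being
their intersection by a dimension count. Hence `X, Z₀ ⊔ Z₁, …, Z_{m-1} ⊔ Z_m, Y` is a walk of
length at most `m + 1` in `Λ_t(n,k)`.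
-/

namespace SimpleGraph

variable {V : Type*} {G : SimpleGraph V}

lemma exists_walk_length_le_succ_of_eq_or_adj {u v w : V} (h : u = v ∨ G.Adj u v)
    (p : G.Walk v w) : ∃ q : G.Walk u w, q.length ≤ p.length + 1 := by
  rcases h with rfl | h
  · exact ⟨p, Nat.le_succ _⟩
  · exact ⟨p.cons h, le_rfl⟩

lemma Preconnected.dist_le_diam [Finite V] (hG : G.Preconnected) (u v : V) :
    G.dist u v ≤ G.diam :=
  have : Nonempty V := ⟨u⟩
  _root_.SimpleGraph.dist_le_diam (connected_iff_ediam_ne_top.mp ⟨hG⟩)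

end SimpleGraph

namespace Submodule

open Module

variable {K V : Type*} [DivisionRing K] [AddCommGroup V] [Module K V] [FiniteDimensional K V]

lemma finrank_pos_of_ne {A B : Submodule K V} {m : ℕ} (hAB : A ≠ B) (hA : finrank K A = m)
    (hB : finrank K B = m) : 0 < m := by
  refine Nat.pos_of_ne_zero fun hm => hAB ?_
  rw [finrank_eq_zero.mp (hA.trans hm), finrank_eq_zero.mp (hB.trans hm)]

lemma finrank_sup_eq_succ {A B : Submodule K V} {m : ℕ} (hAB : A ≠ B) (hA : finrank K A = m)
    (hB : finrank K B = m) (hinf : finrank K ↥(A ⊓ B) = m - 1) : finrank K ↥(A ⊔ B) = m + 1 := by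
  have hm := finrank_pos_of_ne hAB hA hB
  have := finrank_sup_add_finrank_inf_eq A B
  omega

lemma eq_inf_of_finrank_eq_sub_one {X W Z : Submodule K V} {k : ℕ} (hXW : X ≠ W)
    (hX : finrank K X = k) (hW : finrank K W = k) (hZ : finrank K Z = k - 1)
    (hZX : Z ≤ X) (hZW : Z ≤ W) : Z = X ⊓ W := by
  have hlt : X ⊓ W < X := inf_le_left.lt_of_ne fun h =>
    hXW (eq_of_le_of_finrank_eq (h ▸ inf_le_right) (hX.trans hW.symm))
  have := finrank_lt_finrank_of_lt hlt
  exact eq_of_le_of_finrank_le (le_inf hZX hZW) (by omega)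

end Submodule

section Codes

variable {F}
omit [Fintype F]

omit [DecidableEq F] in
lemma dualCode_anti {n : ℕ} {C D : Submodule F (Fin n → F)} (h : C ≤ D) :
    dualCode F n D ≤ dualCode F n C :=
  fun _ hv c hc => hv c (h hc)

lemma goodCode_of_le {n t m k : ℕ} {C D : Submodule F (Fin n → F)} (hCD : C ≤ D)
    (hC : goodCode F n t m C) (hD : Module.finrank F D = k) : goodCode F n t k D :=
  ⟨hD, fun v hv => hC.2 v (dualCode_anti hCD hv)⟩

lemma sup_goodCode_of_deltaGraph_adj {n t k : ℕ}
    {Z₀ Z₁ : {C : Submodule F (Fin n → F) // goodCode F n t (k - 1) C}}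
    (h : (deltaGraph F n t (k - 1)).Adj Z₀ Z₁) : goodCode F n t k (Z₀.1 ⊔ Z₁.1) := by
  obtain ⟨hne, hinf⟩ := h
  have hne' : Z₀.1 ≠ Z₁.1 := Subtype.coe_ne_coe.mpr hne
  have hpos := Submodule.finrank_pos_of_ne hne' Z₀.2.1 Z₁.2.1
  refine goodCode_of_le le_sup_left Z₀.2 ?_
  rw [Submodule.finrank_sup_eq_succ hne' Z₀.2.1 Z₁.2.1 hinf]
  omega

lemma lambdaGraph_eq_or_adj_of_le {n t k : ℕ}
    {X W : {C : Submodule F (Fin n → F) // goodCode F n t k C}} {Z : Submodule F (Fin n → F)}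
    (hZ : goodCode F n t (k - 1) Z) (hZX : Z ≤ X.1) (hZW : Z ≤ W.1) :
    X = W ∨ (lambdaGraph F n t k).Adj X W := by
  refine or_iff_not_imp_left.mpr fun hXW => ⟨hXW, ?_⟩
  rwa [← Submodule.eq_inf_of_finrank_eq_sub_one (Subtype.coe_ne_coe.mpr hXW) X.2.1 W.2.1 hZ.1
    hZX hZW]

lemma exists_lambdaGraph_walk_of_deltaGraph_walk {n t k : ℕ}
    {Z₀ Z₁ : {C : Submodule F (Fin n → F) // goodCode F n t (k - 1) C}}
    (p : (deltaGraph F n t (k - 1)).Walk Z₀ Z₁)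
    {X Y : {C : Submodule F (Fin n → F) // goodCode F n t k C}}
    (hX : Z₀.1 ≤ X.1) (hY : Z₁.1 ≤ Y.1) :
    ∃ w : (lambdaGraph F n t k).Walk X Y, w.length ≤ p.length + 1 := by
  induction p generalizing X with
  | @nil Z =>
    exact SimpleGraph.exists_walk_length_le_succ_of_eq_or_adj
      (lambdaGraph_eq_or_adj_of_le Z.2 hX hY) .nil
  | @cons Z₀ Z Z₁ h q ih =>
    obtain ⟨w, hw⟩ := ih (X := ⟨Z₀.1 ⊔ Z.1, sup_goodCode_of_deltaGraph_adj h⟩) le_sup_right hY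
    obtain ⟨w', hw'⟩ := SimpleGraph.exists_walk_length_le_succ_of_eq_or_adj
      (lambdaGraph_eq_or_adj_of_le Z₀.2 hX (le_sup_left : Z₀.1 ≤ Z₀.1 ⊔ Z.1)) w
    exact ⟨w', by rw [SimpleGraph.Walk.length_cons]; omega⟩

end Codes

theorem lambda_dist_le_delta_diam_succ
    {n k t : ℕ} (d : ℕ)
    (hconn : (deltaGraph F n t (k-1)).Preconnected)
    (hdiam : (deltaGraph F n t (k-1)).diam = d) :
    ∀ X Y : {C : Submodule F (Fin n → F) // goodCode F n t k C},
      ¬ IsIsolated F n t k X.1 → ¬ IsIsolated F n t k Y.1 →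
      (lambdaGraph F n t k).dist X Y ≤ d + 1 := by
  intro X Y hX hY
  obtain ⟨A, hAX, hA⟩ : ∃ A ≤ X.1, goodCode F n t (k - 1) A := by
    simpa [IsIsolated] using hX
  obtain ⟨B, hBY, hB⟩ : ∃ B ≤ Y.1, goodCode F n t (k - 1) B := by
    simpa [IsIsolated] using hY
  obtain ⟨p, hp⟩ := (hconn ⟨A, hA⟩ ⟨B, hB⟩).exists_walk_length_eq_dist
  obtain ⟨w, hw⟩ := exists_lambdaGraph_walk_of_deltaGraph_walk p hAX hBY
  calc (lambdaGraph F n t k).dist X Y ≤ w.length := SimpleGraph.dist_le w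
    _ ≤ p.length + 1 := hw
    _ ≤ d + 1 := by
      rw [hp, ← hdiam]
      exact Nat.succ_le_succ (hconn.dist_le_diam _ _)
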